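/- arXiv:0709.2564 — 5 statements merged into one kernel-verified Lean document; each statement's English description precedes it below -/
import Mathlib

section
/- Every monotonic probability measure μ on [0,1] can be uniquely represented as a weighted sum of the Dirac measure at 0 and a measure absolutely continuous with respect to Lebesgue measure whose density has a monotone non-increasing representative. -/
/-!
Translating an interval to the right never increases its mass. Hence an interval `I` lying at
distance `≥ ε` from `0` has about `ε / |I|` disjoint translates to its left inside `[0,1]`,
each at least as heavy, so `μ I ≤ C_ε |I|`: away from `0` the measure is absolutely continuous.
Comparing balls of equal radius shows that the Radon–Nikodym derivative is antitone on its
Lebesgue points, and its upper envelope over these points is an antitone representative.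
What is left is an atom at `0`, and the decomposition is unique because an absolutely
continuous part carries no mass at `0`.
-/

open MeasureTheory Set Filter Metric
open scoped ENNReal NNReal Topology

/-- A probability measure on `[0,1]` is *monotonic* if `μ(A) ≥ μ((A+x) ∩ [0,1])`
for every interval `A ⊆ [0,1]` and every `x ∈ [0,1]`. -/
def MonotonicMeasure (μ : Measure ℝ) : Prop :=
  ∀ a b : ℝ, Set.Icc a b ⊆ Set.Icc 0 1 →
    ∀ x ∈ Set.Icc (0:ℝ) 1,
      μ ((fun y => y + x) '' Set.Icc a b ∩ Set.Icc 0 1) ≤ μ (Set.Icc a b)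

section AntitoneExtension

variable {α β : Type*} [Preorder α] [CompleteLattice β]

theorem antitone_biSup_inter_Ici (S : Set α) (g : α → β) :
    Antitone fun x => ⨆ y ∈ S ∩ Ici x, g y :=
  fun _ _ hab => biSup_mono fun _ hy => ⟨hy.1, hab.trans hy.2⟩

theorem AntitoneOn.biSup_inter_Ici_eq {S : Set α} {g : α → β} (hg : AntitoneOn g S) {x : α}
    (hx : x ∈ S) : ⨆ y ∈ S ∩ Ici x, g y = g x :=
  le_antisymm (iSup₂_le fun _ hy => hg hx hy.1 hy.2) (le_iSup₂_of_le x ⟨hx, le_rfl⟩ le_rfl)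

end AntitoneExtension

theorem MeasureTheory.Measure.eq_restrict_compl_of_eq_smul_dirac_add {α : Type*}
    [MeasurableSpace α] [MeasurableSingletonClass α] {μ ν : Measure α} {a : α} {c : ℝ≥0∞}
    (h : μ = c • dirac a + ν) (hν : ν {a} = 0) : c = μ {a} ∧ ν = μ.restrict {a}ᶜ := by
  subst h
  refine ⟨by simp [hν], ?_⟩
  rw [restrict_add, restrict_smul, restrict_eq_zero.2 (by simp), smul_zero, zero_add]
  exact (restrict_eq_self_of_ae_mem (s := {a}ᶜ) (compl_mem_ae_iff.2 hν)).symm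

namespace MonotonicMeasure

variable {μ : Measure ℝ}

theorem measure_Icc_add_le (hmono : MonotonicMeasure μ) (hsupp : μ (Icc 0 1)ᶜ = 0)
    {c d t : ℝ} (hc : 0 ≤ c) (hd : d ≤ 1) (ht : 0 ≤ t) :
    μ (Icc (c + t) (d + t)) ≤ μ (Icc c d) := by
  by_cases ht1 : t ≤ 1
  · have h := hmono c d (fun y hy => ⟨hc.trans hy.1, hy.2.trans hd⟩) t ⟨ht, ht1⟩
    rwa [image_add_const_Icc, measure_inter_conull hsupp] at h
  · have hout : Icc (c + t) (d + t) ⊆ (Icc 0 1)ᶜ := fun y hy hy' => by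
      linarith [hy.1, hy'.2]
    simp [measure_mono_null hout hsupp]

theorem natCast_mul_measure_Icc_le (hmono : MonotonicMeasure μ) (hsupp : μ (Icc 0 1)ᶜ = 0)
    {a b h : ℝ} {n : ℕ} (hab : a ≤ b) (hh : b - a < h) (ha : n * h ≤ a) (hb : b ≤ 1 + h) :
    n * μ (Icc a b) ≤ μ univ := by
  have hh0 : 0 < h := by linarith
  set J : ℕ → Set ℝ := fun k => Icc (a - (k + 1) * h) (b - (k + 1) * h)
  have hJ : ∀ k < n, μ (Icc a b) ≤ μ (J k) := by
    intro k hk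
    have hk' : (k : ℝ) + 1 ≤ n := by exact_mod_cast hk
    have := hmono.measure_Icc_add_le hsupp (c := a - (k + 1) * h) (d := b - (k + 1) * h)
      (t := (k + 1) * h) (by nlinarith) (by nlinarith) (by positivity)
    simpa only [sub_add_cancel] using this
  have hdisj : Pairwise (Function.onFun Disjoint J) := by
    refine (pairwise_disjoint_on J).2 fun k l hkl => disjoint_left.2 fun y hk hl => ?_
    have hkl' : (k : ℝ) + 1 ≤ l := by exact_mod_cast hkl
    nlinarith [hk.1, hl.2]
  calc (n : ℝ≥0∞) * μ (Icc a b) = ∑ _k ∈ Finset.range n, μ (Icc a b) := by simp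
    _ ≤ ∑ k ∈ Finset.range n, μ (J k) :=
      Finset.sum_le_sum fun k hk => hJ k (Finset.mem_range.1 hk)
    _ = μ (⋃ k ∈ Finset.range n, J k) :=
      (measure_biUnion_finset (hdisj.set_pairwise _) fun _ _ => measurableSet_Icc).symm
    _ ≤ μ univ := measure_mono (subset_univ _)

theorem measure_closedBall_le [IsFiniteMeasure μ] (hmono : MonotonicMeasure μ)
    (hsupp : μ (Icc 0 1)ᶜ = 0) {ε x r : ℝ} (hεx : ε < x) (hx : x ≤ 1) (hr : 0 < r)
    (hrε : r ≤ ε / 8) :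
    μ (closedBall x r) ≤ ENNReal.ofReal (3 * μ.real univ / ε) * volume (closedBall x r) := by
  have hε : 0 < ε := by linarith
  set n := ⌊(x - r) / (3 * r)⌋₊
  have hn_le : (n : ℝ) * (3 * r) ≤ x - r :=
    (le_div_iff₀ (by positivity)).1 (Nat.floor_le (div_nonneg (by linarith) (by positivity)))
  have hn_gt : ε < 6 * r * n := by
    have := (div_lt_iff₀ (by positivity)).1 (Nat.lt_floor_add_one ((x - r) / (3 * r)))
    nlinarith
  have hcount := hmono.natCast_mul_measure_Icc_le hsupp (n := n) (by linarith : x - r ≤ x + r)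
    (by linarith : x + r - (x - r) < 3 * r) hn_le (by linarith)
  have hcount' : n * μ.real (Icc (x - r) (x + r)) ≤ μ.real univ := by
    simpa [measureReal_def, ENNReal.toReal_mul] using
      ENNReal.toReal_mono (measure_ne_top μ univ) hcount
  have hm : μ.real (Icc (x - r) (x + r)) ≤ 3 * μ.real univ / ε * (2 * r) := by
    rw [div_mul_eq_mul_div, le_div_iff₀ hε]
    nlinarith [measureReal_nonneg (μ := μ) (s := Icc (x - r) (x + r))]
  rw [Real.closedBall_eq_Icc, Real.volume_Icc, ← ofReal_measureReal,
    ← ENNReal.ofReal_mul (by positivity)]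
  exact ENNReal.ofReal_le_ofReal (by linarith)

theorem absolutelyContinuous_restrict_Ioc [IsFiniteMeasure μ] (hmono : MonotonicMeasure μ)
    (hsupp : μ (Icc 0 1)ᶜ = 0) {ε : ℝ} (hε : 0 < ε) :
    μ.restrict (Ioc ε 1) ≪ volume := by
  set C : ℝ≥0 := (3 * μ.real univ / ε).toNNReal
  have hle : ∀ s ⊆ Ioc ε 1, μ s ≤ (C • volume) s := by
    refine fun s hs => (Besicovitch.vitaliFamily μ).measure_le_of_frequently_le _
      Measure.AbsolutelyContinuous.rfl s fun x hx => ?_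
    refine (Besicovitch.tendsto_filterAt μ x).frequently (Eventually.frequently ?_)
    filter_upwards [Ioc_mem_nhdsGT (by positivity : (0 : ℝ) < ε / 8)] with r hr
    exact hmono.measure_closedBall_le hsupp (hs hx).1 (hs hx).2 hr.1 hr.2
  intro s hs
  rw [Measure.restrict_apply' measurableSet_Ioc]
  exact nonpos_iff_eq_zero.1 <| (hle _ inter_subset_right).trans_eq <|
    measure_mono_null inter_subset_left (by simp [hs])

theorem absolutelyContinuous_restrict_compl_zero [IsFiniteMeasure μ]
    (hmono : MonotonicMeasure μ) (hsupp : μ (Icc 0 1)ᶜ = 0) :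
    μ.restrict {0}ᶜ ≪ volume := by
  intro s hs
  rw [Measure.restrict_apply' (measurableSet_singleton 0).compl]
  have hcover : s ∩ {0}ᶜ ⊆ (⋃ n : ℕ, s ∩ Ioc (1 / (n + 1 : ℝ)) 1) ∪ (Icc 0 1)ᶜ := by
    rintro y ⟨hys, hy0⟩
    by_cases hy : y ∈ Icc (0 : ℝ) 1
    · obtain ⟨n, hn⟩ := exists_nat_one_div_lt (lt_of_le_of_ne hy.1 (Ne.symm hy0))
      exact Or.inl (mem_iUnion.2 ⟨n, hys, hn, hy.2⟩)
    · exact Or.inr hy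
  refine measure_mono_null hcover (measure_union_null (measure_iUnion_null fun n => ?_) hsupp)
  have := hmono.absolutelyContinuous_restrict_Ioc hsupp (by positivity : (0 : ℝ) < 1 / (n + 1)) hs
  rwa [Measure.restrict_apply' measurableSet_Ioc] at this

theorem measure_closedBall_le_of_le (hmono : MonotonicMeasure μ) (hsupp : μ (Icc 0 1)ᶜ = 0)
    {s t r : ℝ} (hrs : r ≤ s) (hs : s + r ≤ 1) (hst : s ≤ t) :
    μ (closedBall t r) ≤ μ (closedBall s r) := by
  have := hmono.measure_Icc_add_le hsupp (c := s - r) (d := s + r) (t := t - s)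
    (by linarith) hs (by linarith)
  rw [Real.closedBall_eq_Icc, Real.closedBall_eq_Icc]
  convert this using 3 <;> ring

theorem antitoneOn_of_tendsto_div_volume_closedBall (hmono : MonotonicMeasure μ)
    (hsupp : μ (Icc 0 1)ᶜ = 0) (g : ℝ → ℝ≥0∞) :
    AntitoneOn g {x | x ∈ Ioc 0 1 ∧ Tendsto (fun r => μ.restrict {0}ᶜ (closedBall x r) /
      volume (closedBall x r)) (𝓝[>] 0) (𝓝 (g x))} := by
  rintro s ⟨hs, hs_lim⟩ t ⟨ht, ht_lim⟩ hst
  rcases hst.eq_or_lt with rfl | hlt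
  · rfl
  refine le_of_tendsto_of_tendsto ht_lim hs_lim ?_
  filter_upwards [Ioo_mem_nhdsGT (lt_min hs.1 (sub_pos.2 (hlt.trans_le ht.2)))] with r hr
  have hrs : r < s := hr.2.trans_le (min_le_left _ _)
  have hrs' : r < 1 - s := hr.2.trans_le (min_le_right _ _)
  have hzero : closedBall s r ⊆ {0}ᶜ := subset_compl_singleton_iff.2 fun h => by
    rw [mem_closedBall, Real.dist_eq, zero_sub, abs_neg, abs_of_pos hs.1] at h
    linarith
  have hvol : volume (closedBall t r) = volume (closedBall s r) := by
    simp only [Real.volume_closedBall]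
  rw [hvol]
  refine ENNReal.div_le_div_right ?_ _
  calc μ.restrict {0}ᶜ (closedBall t r) ≤ μ (closedBall t r) := Measure.restrict_le_self _
    _ ≤ μ (closedBall s r) :=
      hmono.measure_closedBall_le_of_le hsupp hrs.le (by linarith) hst
    _ = μ.restrict {0}ᶜ (closedBall s r) := (Measure.restrict_eq_self μ hzero).symm

theorem exists_antitoneOn_density [IsFiniteMeasure μ] (hmono : MonotonicMeasure μ)
    (hsupp : μ (Icc 0 1)ᶜ = 0) :
    ∃ f : ℝ → ℝ≥0∞, μ.restrict {0}ᶜ = volume.withDensity f ∧ AntitoneOn f (Ioi 0) ∧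
      ∀ x ∉ Icc (0 : ℝ) 1, f x = 0 := by
  set μ' := μ.restrict {0}ᶜ
  set g := μ'.rnDeriv volume
  set S := {x | x ∈ Ioc 0 1 ∧ Tendsto (fun r => μ' (closedBall x r) /
      volume (closedBall x r)) (𝓝[>] 0) (𝓝 (g x))}
  have hg_anti : AntitoneOn g S := hmono.antitoneOn_of_tendsto_div_volume_closedBall hsupp g
  have hμ' : ∀ᵐ x ∂μ', x ∈ Ioc (0 : ℝ) 1 := by
    rw [ae_restrict_iff' (measurableSet_singleton 0).compl]
    filter_upwards [mem_ae_iff.2 hsupp] with x hx hx0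
    exact ⟨lt_of_le_of_ne hx.1 (Ne.symm hx0), hx.2⟩
  have hg_out : ∀ᵐ x, x ∉ Ioc (0 : ℝ) 1 → g x = 0 := by
    filter_upwards [Measure.ae_rnDeriv_ne_zero_imp_of_ae volume hμ'] with x hx hxI
    exact not_not.1 (mt hx hxI)
  set f := (Ioc 0 1).indicator fun x => ⨆ y ∈ S ∩ Ici x, g y with hf_def
  have hfg : f =ᵐ[volume] g := by
    filter_upwards [Besicovitch.ae_tendsto_rnDeriv μ' volume, hg_out] with x hx_lim hx_out
    by_cases hx : x ∈ Ioc 0 1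
    · rw [hf_def, indicator_of_mem hx]
      exact hg_anti.biSup_inter_Ici_eq ⟨hx, hx_lim⟩
    · rw [hf_def, indicator_of_notMem hx, hx_out hx]
  refine ⟨f, ?_, fun a ha b hb hab => ?_, fun x hx => ?_⟩
  · rw [withDensity_congr_ae hfg, Measure.withDensity_rnDeriv_eq μ' volume
      (hmono.absolutelyContinuous_restrict_compl_zero hsupp)]
  · by_cases hb1 : b ≤ 1
    · rw [hf_def, indicator_of_mem (mem_Ioc.2 ⟨ha, hab.trans hb1⟩),
        indicator_of_mem (mem_Ioc.2 ⟨hb, hb1⟩)]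
      exact antitone_biSup_inter_Ici S g hab
    · rw [hf_def, indicator_of_notMem fun h : b ∈ Ioc 0 1 => hb1 h.2]
      exact zero_le
  · exact indicator_of_notMem (fun h => hx (Ioc_subset_Icc_self h)) _

end MonotonicMeasure

theorem stmt1 (μ : Measure ℝ) [IsProbabilityMeasure μ]
    (hsupp : μ ((Set.Icc (0:ℝ) 1)ᶜ) = 0)
    (hmono : MonotonicMeasure μ) :
    ∃! p : ENNReal × Measure ℝ,
      μ = p.1 • Measure.dirac (0:ℝ) + p.2 ∧ p.2 ≪ volume ∧
      ∃ f : ℝ → ENNReal, p.2 = volume.withDensity f ∧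
        AntitoneOn f (Set.Ioi 0) ∧ ∀ x, x ∉ Set.Icc (0:ℝ) 1 → f x = 0 := by
  obtain ⟨f, hf, hf_anti, hf_zero⟩ := hmono.exists_antitoneOn_density hsupp
  refine ⟨(μ {0}, μ.restrict {0}ᶜ), ⟨?_, ?_, f, hf, hf_anti, hf_zero⟩, ?_⟩
  · rw [← Measure.restrict_singleton,
      Measure.restrict_add_restrict_compl (measurableSet_singleton 0)]
  · exact hf ▸ withDensity_absolutelyContinuous _ _
  · rintro ⟨c, ν⟩ ⟨hμ, hν, -⟩
    obtain ⟨rfl, rfl⟩ :=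
      Measure.eq_restrict_compl_of_eq_smul_dirac_add hμ (hν Real.volume_singleton)
    rfl
end

section
/- The restriction of a monotonic probability measure μ on [0,1] to any interval [b,1] with b ∈ (0,1) is absolutely continuous with respect to Lebesgue measure. -/
open MeasureTheory Set

/-! If an interval `I ⊆ [b, 1]` has length less than `s`, its translates `I - k s` for
`k = 0, …, ⌊b / s⌋` are pairwise disjoint subintervals of `[0, 1]`, and by monotonicity each is at
least as heavy as `I`. Hence `μ I ≤ s / b`, so on `[b, 1]` the measure `μ` is dominated by
`(2 / b) • volume` (taking `s` twice the length of a covering interval). -/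

open scoped ENNReal

lemma MeasureTheory.Measure.le_smul_volume_of_measure_Ioc_le {ν : Measure ℝ} {K : ℝ≥0∞}
    (hK₀ : K ≠ 0) (hK : K ≠ ∞) (h : ∀ a c, ν (Ioc a c) ≤ K * ENNReal.ofReal (c - a)) :
    ν ≤ K • volume := by
  intro s
  have hvol : (K • volume) s = (K • StieltjesFunction.id.outer) s := by
    rw [Measure.smul_apply, _root_.smul_apply, Real.volume_val, StieltjesFunction.measure]
    rfl
  rw [hvol, StieltjesFunction.outer, OuterMeasure.smul_ofFunction hK]
  refine (OuterMeasure.le_ofFunction.2 (fun t => ?_) : ν.toOuterMeasure ≤ _) s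
  simp only [Pi.smul_apply, smul_eq_mul, StieltjesFunction.length_eq,
    ENNReal.mul_iInf_of_ne hK₀ hK]
  refine le_iInf₂ fun a c => le_iInf fun hsub => ?_
  exact (measure_mono fun x hx => hsub ⟨hx, not_isBot x⟩).trans (h a c)

namespace MonotonicMeasure

variable {μ : Measure ℝ}

lemma measure_Icc_le_measure_Icc_sub (hμ : MonotonicMeasure μ) {p q x : ℝ}
    (hx : x ∈ Icc (0 : ℝ) 1) (hxp : x ≤ p) (hq : q ≤ 1) :
    μ (Icc p q) ≤ μ (Icc (p - x) (q - x)) := by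
  have h := hμ (p - x) (q - x) (Icc_subset_Icc (by linarith) (by linarith [hx.1])) x hx
  rwa [image_add_const_Icc, sub_add_cancel, sub_add_cancel,
    inter_eq_left.2 (Icc_subset_Icc (by linarith [hx.1]) hq)] at h

lemma succ_mul_measure_Icc_le_one [IsProbabilityMeasure μ] (hμ : MonotonicMeasure μ) (n : ℕ)
    {p q s : ℝ} (hpq : p ≤ q) (hq : q ≤ 1) (hqs : q - p < s) (hns : n * s ≤ p) :
    (n + 1) * μ (Icc p q) ≤ 1 := by
  have hs : 0 ≤ s := by linarith
  set F : ℕ → Set ℝ := fun k => Icc (p - k * s) (q - k * s)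
  have hF : ∀ k ∈ Finset.range (n + 1), μ (Icc p q) ≤ μ (F k) := by
    intro k hk
    have hkn : (k : ℝ) ≤ n := by exact_mod_cast Finset.mem_range_succ_iff.mp hk
    have hks : (k : ℝ) * s ≤ n * s := by gcongr
    exact hμ.measure_Icc_le_measure_Icc_sub ⟨by positivity, by linarith⟩ (by linarith) hq
  have hdisj := (pairwise_disjoint_on F).2 fun i j hij => Set.disjoint_left.2 fun x hxi hxj => by
    have : (i : ℝ) + 1 ≤ j := by exact_mod_cast hij
    simp only [F, mem_Icc] at hxi hxj
    nlinarith [hxi.1, hxj.2]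
  calc (n + 1) * μ (Icc p q) = (Finset.range (n + 1)).card • μ (Icc p q) := by simp
    _ ≤ ∑ k ∈ Finset.range (n + 1), μ (F k) := Finset.card_nsmul_le_sum _ _ _ hF
    _ = μ (⋃ k ∈ Finset.range (n + 1), F k) :=
      (measure_biUnion_finset (hdisj.set_pairwise _) fun _ _ => measurableSet_Icc).symm
    _ ≤ 1 := prob_le_one

lemma measure_Icc_le [IsProbabilityMeasure μ] (hμ : MonotonicMeasure μ) {b p q s : ℝ}
    (hb : 0 < b) (hbp : b ≤ p) (hpq : p ≤ q) (hq : q ≤ 1) (hqs : q - p < s) :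
    μ (Icc p q) ≤ ENNReal.ofReal (s / b) := by
  have hs : 0 < s := by linarith
  set n := ⌊b / s⌋₊
  have hns : n * s ≤ p := by
    have := Nat.floor_le (div_pos hb hs).le
    rw [le_div_iff₀ hs] at this
    linarith
  have hbn : b < (n + 1) * s := by
    rw [← div_lt_iff₀ hs]
    exact Nat.lt_floor_add_one _
  have key : (n + 1) * μ.real (Icc p q) ≤ 1 := by
    simpa [ENNReal.toReal_mul, ENNReal.toReal_add, measureReal_def] using
      ENNReal.toReal_mono ENNReal.one_ne_top (hμ.succ_mul_measure_Icc_le_one n hpq hq hqs hns)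
  rw [← ofReal_measureReal]
  apply ENNReal.ofReal_le_ofReal
  rw [le_div_iff₀ hb]
  nlinarith [measureReal_nonneg (μ := μ) (s := Icc p q)]

lemma measure_Ioc_inter_Icc_le [IsProbabilityMeasure μ] (hμ : MonotonicMeasure μ) {b : ℝ}
    (hb : 0 < b) (a c : ℝ) :
    μ (Ioc a c ∩ Icc b 1) ≤ ENNReal.ofReal (2 / b) * ENNReal.ofReal (c - a) := by
  rcases le_or_gt c a with hca | hac
  · simp [Ioc_eq_empty_of_le hca]
  have hsub : Ioc a c ∩ Icc b 1 ⊆ Icc (max a b) (min c 1) :=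
    fun x ⟨⟨hax, hxc⟩, hbx, hx1⟩ => ⟨max_le hax.le hbx, le_min hxc hx1⟩
  rcases le_or_gt (max a b) (min c 1) with hpq | hqp
  · have hlen : min c 1 - max a b < 2 * (c - a) := by
      linarith [le_max_left a b, min_le_left c 1]
    calc μ (Ioc a c ∩ Icc b 1) ≤ μ (Icc (max a b) (min c 1)) := measure_mono hsub
      _ ≤ ENNReal.ofReal (2 * (c - a) / b) :=
        hμ.measure_Icc_le hb (le_max_right a b) hpq (min_le_right c 1) hlen
      _ = ENNReal.ofReal (2 / b) * ENNReal.ofReal (c - a) := by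
        rw [← ENNReal.ofReal_mul (by positivity), div_mul_eq_mul_div]
  · rw [subset_empty_iff.1 (hsub.trans (Icc_eq_empty_of_lt hqp).subset), measure_empty]
    exact zero_le

lemma restrict_Icc_le_smul_volume [IsProbabilityMeasure μ] (hμ : MonotonicMeasure μ) {b : ℝ}
    (hb : 0 < b) : μ.restrict (Icc b 1) ≤ ENNReal.ofReal (2 / b) • volume :=
  Measure.le_smul_volume_of_measure_Ioc_le (by simpa using hb) ENNReal.ofReal_ne_top fun a c => by
    simpa [Measure.restrict_apply measurableSet_Ioc] using hμ.measure_Ioc_inter_Icc_le hb a c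

end MonotonicMeasure

theorem stmt2_general (μ : Measure ℝ) [IsProbabilityMeasure μ]
    (hmono : MonotonicMeasure μ)
    (b : ℝ) (hb : b ∈ Set.Ioo (0:ℝ) 1) :
    μ.restrict (Set.Icc b 1) ≪ volume :=
  Measure.absolutelyContinuous_of_le_smul (hmono.restrict_Icc_le_smul_volume hb.1)

theorem stmt2 (μ : Measure ℝ) [IsProbabilityMeasure μ]
    (hsupp : μ ((Set.Icc (0:ℝ) 1)ᶜ) = 0)
    (hmono : MonotonicMeasure μ)
    (b : ℝ) (hb : b ∈ Set.Ioo (0:ℝ) 1) :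
    μ.restrict (Set.Icc b 1) ≪ volume :=
  stmt2_general μ hmono b hb
end

section
/- A probability measure μ on [0,1] is monotonic if and only if the function x ↦ μ([0,x]) is concave on [0,1]. (Equivalently, x ↦ μ((x,1]) is convex.) -/
open MeasureTheory Set

/-!
Write `G x = μ [0, x]`. Monotonicity, applied to translates of closed intervals and passed to a
limit, says that `μ (t, t + h] ≤ μ (s, s + h]` for `s ≤ t`: increments of `G` over intervals of equal
length decrease from left to right. This makes `G` midpoint concave, and, through
`μ (x, y] ≤ μ (0, y - x]`, continuous; hence `G` is concave.

Conversely, a concave `G` with `G 0 ≥ 0` lies above its chord from `0`, so `μ` has no atoms in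
`(0, 1]`. Then `μ ([a + x, b + x] ∩ [0, 1])` is an increment of `G` over an interval that is no longer
than `[a, b]` and lies to its right, which concavity bounds by `μ (a, b]`.
-/

theorem nonneg_of_midpoint_concave {g : ℝ → ℝ} {p q : ℝ} (hg : ContinuousOn g (Icc p q))
    (hmid : ∀ x ∈ Icc p q, ∀ y ∈ Icc p q, g x + g y ≤ 2 * g ((x + y) / 2))
    (hp : 0 ≤ g p) (hq : 0 ≤ g q) {z : ℝ} (hz : z ∈ Icc p q) : 0 ≤ g z := by
  -- A negative minimum would be attained at a leftmost point `d ∈ (p, q)`; midpoint concavity at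
  -- `d = ((d - δ) + (d + δ)) / 2` then forces `g (d - δ) = g d`, contradicting leftmostness.
  by_contra! hneg
  obtain ⟨c, hc, hmin⟩ := isCompact_Icc.exists_isMinOn ⟨z, hz⟩ hg
  have hK : IsCompact (Icc p q ∩ g ⁻¹' {g c}) :=
    isCompact_Icc.of_isClosed_subset
      (hg.preimage_isClosed_of_isClosed isClosed_Icc isClosed_singleton) inter_subset_left
  obtain ⟨d, ⟨hd, hdc : g d = g c⟩, hleast⟩ := hK.exists_isLeast ⟨c, hc, rfl⟩
  have hgd : g d < 0 := hdc ▸ (hmin hz).trans_lt hneg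
  have hpd : p < d := hd.1.lt_of_ne (by rintro rfl; linarith)
  have hdq : d < q := hd.2.lt_of_ne (by rintro rfl; linarith)
  set δ := min (d - p) (q - d)
  have hδ : 0 < δ := lt_min (sub_pos.2 hpd) (sub_pos.2 hdq)
  have hl : d - δ ∈ Icc p q := ⟨by linarith [min_le_left (d - p) (q - d)], by linarith⟩
  have hr : d + δ ∈ Icc p q := ⟨by linarith, by linarith [min_le_right (d - p) (q - d)]⟩
  have hsum := hmid _ hl _ hr
  rw [show (d - δ + (d + δ)) / 2 = d by ring] at hsum
  have hright : g c ≤ g (d + δ) := hmin hr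
  have hleft : g (d - δ) = g c := le_antisymm (by linarith) (hmin hl)
  linarith [hleast ⟨hl, hleft⟩]

theorem concaveOn_of_midpoint_concave {f : ℝ → ℝ} {s : Set ℝ} (hs : Convex ℝ s)
    (hf : ContinuousOn f s) (hmid : ∀ x ∈ s, ∀ y ∈ s, f x + f y ≤ 2 * f ((x + y) / 2)) :
    ConcaveOn ℝ s f := by
  refine LinearOrder.concaveOn_of_lt hs fun x hx y hy hxy a b ha hb hab => ?_
  obtain rfl : a = 1 - b := by linarith
  have hsub : Icc x y ⊆ s := hs.ordConnected.out hx hy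
  obtain ⟨k, hk⟩ : ∃ k, k * (y - x) = f y - f x :=
    ⟨_, div_mul_cancel₀ _ (sub_ne_zero.2 hxy.ne')⟩
  have hchord := nonneg_of_midpoint_concave (g := fun z => f z - (f x + k * (z - x)))
    ((hf.mono hsub).sub (by fun_prop))
    (fun u hu v hv => by linarith [hmid u (hsub hu) v (hsub hv)])
    (by simp) (by simp [hk]) (z := (1 - b) * x + b * y)
    ⟨by nlinarith, by nlinarith⟩
  simp only [smul_eq_mul]
  linear_combination hchord - b * hk

theorem ConcaveOn.add_le_add_of_add_eq {f : ℝ → ℝ} {s : Set ℝ} (hf : ConcaveOn ℝ s f)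
    {a b c d : ℝ} (ha : a ∈ s) (hd : d ∈ s) (hab : a ≤ b) (hbd : b ≤ d) (h : b + c = a + d) :
    f a + f d ≤ f b + f c := by
  rcases (hab.trans hbd).eq_or_lt with rfl | had
  · obtain rfl : b = a := le_antisymm hbd hab
    obtain rfl : c = b := by linarith
    rfl
  set t := (d - b) / (d - a)
  have ht : t * (d - a) = d - b := div_mul_cancel₀ _ (sub_ne_zero.2 had.ne')
  have ht0 : 0 ≤ t := div_nonneg (by linarith) (by linarith)
  have ht1 : t ≤ 1 := (div_le_one (by linarith)).2 (by linarith)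
  have hb := hf.2 ha hd ht0 (sub_nonneg.2 ht1) (by ring)
  have hc := hf.2 ha hd (sub_nonneg.2 ht1) ht0 (by ring)
  simp only [smul_eq_mul] at hb hc
  rw [show t * a + (1 - t) * d = b by linear_combination -ht] at hb
  rw [show (1 - t) * a + t * d = c by linear_combination ht - h] at hc
  linarith

open Filter Topology
open scoped ENNReal

section

variable {μ : Measure ℝ}

theorem measureReal_Ioc_eq_sub [IsFiniteMeasure μ] {c u : ℝ} (hc : 0 ≤ c) (hcu : c ≤ u) :
    μ.real (Ioc c u) = μ.real (Icc 0 u) - μ.real (Icc 0 c) := by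
  rw [← Icc_union_Ioc_eq_Icc hc hcu, measureReal_union
    ((Iic_disjoint_Ioc le_rfl).mono_left Icc_subset_Iic_self) measurableSet_Ioc]
  ring

theorem exists_measure_Ioc_lt [IsFiniteMeasure μ] (a : ℝ) {ε : ℝ≥0∞} (hε : 0 < ε) :
    ∃ δ > 0, μ (Ioc a (a + δ)) < ε := by
  have hlim : Tendsto (fun δ => μ (Ioc a (a + δ))) (𝓝[>] 0) (𝓝 (μ (⋂ δ > 0, Ioc a (a + δ)))) :=
    tendsto_measure_biInter_gt (fun _ _ => measurableSet_Ioc.nullMeasurableSet)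
      (fun _ _ _ hij => Ioc_subset_Ioc_right (by linarith)) ⟨1, one_pos, measure_ne_top _ _⟩
  have hempty : ⋂ δ > 0, Ioc a (a + δ) = ∅ := eq_empty_of_forall_notMem fun y hy => by
    simp only [mem_iInter, mem_Ioc] at hy
    have hay := (hy 1 one_pos).1
    linarith [(hy ((y - a) / 2) (by linarith)).2]
  rw [hempty, measure_empty] at hlim
  exact ((hlim.eventually (gt_mem_nhds hε)).and self_mem_nhdsWithin).exists.imp
    fun δ hδ => ⟨hδ.2, hδ.1⟩

namespace MonotonicMeasure

theorem measure_Ioc_add_le (hμ : MonotonicMeasure μ) {s t h : ℝ} (hs : 0 ≤ s) (hst : s ≤ t)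
    (hh : 0 ≤ h) (hth : t + h ≤ 1) : μ (Ioc t (t + h)) ≤ μ (Ioc s (s + h)) := by
  have hunion : Ioc t (t + h) = ⋃ n : ℕ, Icc (t + 1 / (n + 1)) (t + h) := by
    ext y
    simp only [mem_Ioc, mem_iUnion, mem_Icc]
    constructor
    · rintro ⟨hty, hy⟩
      obtain ⟨n, hn⟩ := exists_nat_one_div_lt (sub_pos.2 hty)
      exact ⟨n, by linarith, hy⟩
    · rintro ⟨n, hty, hy⟩
      exact ⟨by linarith [Nat.one_div_pos_of_nat (α := ℝ) (n := n)], hy⟩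
  have hmono : Monotone fun n : ℕ => Icc (t + 1 / (n + 1)) (t + h) := fun m n hmn =>
    Icc_subset_Icc_left (by gcongr)
  rw [hunion, hmono.measure_iUnion]
  refine iSup_le fun n => ?_
  have hε : (0 : ℝ) < 1 / (n + 1) := Nat.one_div_pos_of_nat
  have htranslate := hμ (s + 1 / (n + 1)) (s + h) (Icc_subset_Icc (by linarith) (by linarith))
    (t - s) ⟨by linarith, by linarith⟩
  rw [image_add_const_Icc, show s + 1 / (n + 1) + (t - s) = t + 1 / (n + 1) by ring,
    show s + h + (t - s) = t + h by ring,
    inter_eq_left.2 (Icc_subset_Icc (by linarith) hth)] at htranslate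
  exact htranslate.trans (measure_mono (Icc_subset_Ioc (by linarith) le_rfl))

variable [IsFiniteMeasure μ]

theorem abs_measureReal_Icc_sub_le (hμ : MonotonicMeasure μ) {x y : ℝ} (hx : x ∈ Icc 0 1)
    (hy : y ∈ Icc 0 1) :
    |μ.real (Icc 0 y) - μ.real (Icc 0 x)| ≤ μ.real (Ioc 0 |y - x|) := by
  wlog hxy : x ≤ y generalizing x y
  · simpa only [abs_sub_comm] using this hy hx (le_of_not_ge hxy)
  have h := hμ.measure_Ioc_add_le le_rfl hx.1 (sub_nonneg.2 hxy) (by linarith [hy.2])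
  rw [add_sub_cancel, zero_add] at h
  rw [abs_of_nonneg (sub_nonneg.2 hxy), ← measureReal_Ioc_eq_sub hx.1 hxy,
    abs_of_nonneg measureReal_nonneg]
  exact ENNReal.toReal_mono (measure_ne_top _ _) h

theorem continuousOn (hμ : MonotonicMeasure μ) :
    ContinuousOn (fun x => μ.real (Icc 0 x)) (Icc 0 1) := by
  refine Metric.continuousOn_iff.2 fun x hx ε hε => ?_
  obtain ⟨δ, hδ, hsmall⟩ := exists_measure_Ioc_lt (μ := μ) 0 (ENNReal.ofReal_pos.2 hε)
  refine ⟨δ, hδ, fun y hy hyx => ?_⟩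
  rw [Real.dist_eq] at hyx ⊢
  calc |μ.real (Icc 0 y) - μ.real (Icc 0 x)| ≤ μ.real (Ioc 0 |y - x|) :=
        hμ.abs_measureReal_Icc_sub_le hx hy
    _ ≤ μ.real (Ioc 0 (0 + δ)) := measureReal_mono (Ioc_subset_Ioc_right (by linarith))
    _ < ε := ENNReal.toReal_lt_of_lt_ofReal hsmall

theorem add_le_two_mul_measureReal_Icc_midpoint (hμ : MonotonicMeasure μ) {x y : ℝ}
    (hx : x ∈ Icc 0 1) (hy : y ∈ Icc 0 1) :
    μ.real (Icc 0 x) + μ.real (Icc 0 y) ≤ 2 * μ.real (Icc 0 ((x + y) / 2)) := by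
  wlog hxy : x ≤ y generalizing x y
  · simpa only [add_comm] using this hy hx (le_of_not_ge hxy)
  have h := hμ.measure_Ioc_add_le (t := (x + y) / 2) (h := (y - x) / 2) hx.1 (by linarith)
    (by linarith) (by linarith [hy.2])
  rw [show (x + y) / 2 + (y - x) / 2 = y by ring, show x + (y - x) / 2 = (x + y) / 2 by ring] at h
  have h' : μ.real (Ioc ((x + y) / 2) y) ≤ μ.real (Ioc x ((x + y) / 2)) :=
    ENNReal.toReal_mono (measure_ne_top _ _) h
  rw [measureReal_Ioc_eq_sub (by linarith [hx.1]) (by linarith),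
    measureReal_Ioc_eq_sub hx.1 (by linarith)] at h'
  linarith

theorem concaveOn (hμ : MonotonicMeasure μ) :
    ConcaveOn ℝ (Icc 0 1) fun x => μ.real (Icc 0 x) :=
  concaveOn_of_midpoint_concave (convex_Icc 0 1) hμ.continuousOn
    fun _ hx _ hy => hμ.add_le_two_mul_measureReal_Icc_midpoint hx hy

end MonotonicMeasure

theorem measure_singleton_eq_zero_of_concaveOn [IsFiniteMeasure μ]
    (hG : ConcaveOn ℝ (Icc 0 1) fun x => μ.real (Icc 0 x)) {s : ℝ} (hs : 0 < s) (hs1 : s ≤ 1) :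
    μ {s} = 0 := by
  have hbound : ∀ q ∈ Ioo 0 s, μ.real {s} ≤ (1 - q / s) * μ.real (Icc 0 s) := fun q hq => by
    have hqs : q / s ≤ 1 := (div_le_one hs).2 hq.2.le
    have hchord := hG.2 (left_mem_Icc.2 zero_le_one) ⟨hs.le, hs1⟩ (sub_nonneg.2 hqs)
      (div_nonneg hq.1.le hs.le) (by ring)
    simp only [smul_eq_mul, mul_zero, zero_add, div_mul_cancel₀ q hs.ne'] at hchord
    calc μ.real {s} ≤ μ.real (Ioc q s) := measureReal_mono (singleton_subset_iff.2 ⟨hq.2, le_rfl⟩)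
      _ = μ.real (Icc 0 s) - μ.real (Icc 0 q) := measureReal_Ioc_eq_sub hq.1.le hq.2.le
      _ ≤ (1 - q / s) * μ.real (Icc 0 s) := by
          nlinarith [mul_nonneg (sub_nonneg.2 hqs) (measureReal_nonneg (μ := μ) (s := Icc 0 0))]
  have hlim : Tendsto (fun q => (1 - q / s) * μ.real (Icc 0 s)) (𝓝[<] s) (𝓝 0) := by
    have hcont : Continuous fun q : ℝ => (1 - q / s) * μ.real (Icc 0 s) := by fun_prop
    simpa [hs.ne'] using (hcont.tendsto s).mono_left nhdsWithin_le_nhds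
  have hzero : μ.real {s} ≤ 0 :=
    ge_of_tendsto hlim (eventually_of_mem (Ioo_mem_nhdsLT hs) hbound)
  exact (measureReal_eq_zero_iff (measure_ne_top _ _)).1 (le_antisymm hzero measureReal_nonneg)

theorem monotonicMeasure_of_concaveOn [IsFiniteMeasure μ]
    (hG : ConcaveOn ℝ (Icc 0 1) fun x => μ.real (Icc 0 x)) : MonotonicMeasure μ := by
  intro a b hab x hx
  rcases (Icc a b).eq_empty_or_nonempty with hempty | ⟨_, hy⟩
  · simp [hempty]
  have hab' : a ≤ b := hy.1.trans hy.2
  have ha : 0 ≤ a := (hab (left_mem_Icc.2 hab')).1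
  have hb : b ≤ 1 := (hab (right_mem_Icc.2 hab')).2
  rw [image_add_const_Icc]
  rcases hx.1.eq_or_lt with rfl | hx0
  · simpa only [add_zero] using measure_mono inter_subset_left
  set u := min (b + x) 1
  refine (measure_mono (t := Icc (a + x) u)
    fun y hy => ⟨hy.1.1, le_min hy.1.2 hy.2.2⟩).trans ?_
  rcases lt_or_ge u (a + x) with hu | hcu
  · simp [Icc_eq_empty_of_lt hu]
  have hu1 : u ≤ 1 := min_le_right _ _
  have hub : u ≤ b + x := min_le_left _ _
  have hatom := measure_singleton_eq_zero_of_concaveOn hG (by linarith) (hcu.trans hu1)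
  have hmajor := hG.add_le_add_of_add_eq (b := a + (u - (a + x))) (c := a + x)
    ⟨ha, by linarith⟩ ⟨by linarith, hu1⟩ (by linarith) (by linarith) (by ring)
  rw [← measure_congr (Ioc_ae_eq_Icc' hatom),
    ← ENNReal.toReal_le_toReal (measure_ne_top _ _) (measure_ne_top _ _)]
  change μ.real _ ≤ μ.real _
  calc μ.real (Ioc (a + x) u) = μ.real (Icc 0 u) - μ.real (Icc 0 (a + x)) :=
        measureReal_Ioc_eq_sub (by linarith) hcu
    _ ≤ μ.real (Icc 0 (a + (u - (a + x)))) - μ.real (Icc 0 a) := by linarith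
    _ ≤ μ.real (Icc 0 b) - μ.real (Icc 0 a) :=
        sub_le_sub_right (measureReal_mono (Icc_subset_Icc_right (by linarith))) _
    _ = μ.real (Ioc a b) := (measureReal_Ioc_eq_sub ha hab').symm
    _ ≤ μ.real (Icc a b) := measureReal_mono Ioc_subset_Icc_self

end

theorem stmt3_general (μ : Measure ℝ) [IsProbabilityMeasure μ] :
    MonotonicMeasure μ ↔
      ConcaveOn ℝ (Set.Icc 0 1) (fun x => (μ (Set.Icc 0 x)).toReal) :=
  ⟨MonotonicMeasure.concaveOn, monotonicMeasure_of_concaveOn⟩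

theorem stmt3 (μ : Measure ℝ) [IsProbabilityMeasure μ]
    (hsupp : μ ((Set.Icc (0:ℝ) 1)ᶜ) = 0) :
    MonotonicMeasure μ ↔
      ConcaveOn ℝ (Set.Icc 0 1) (fun x => (μ (Set.Icc 0 x)).toReal) :=
  stmt3_general μ
end

section
/- Let Δ = {Δ_i} be a finite partition of [0,1] into intervals of positive length, ordered left to right, and let μ be a monotonic probability measure. Then the piecewise constant density of Q_Δ μ, whose value on Δ_i is μ(Δ_i)/m(Δ_i), is non-increasing in i: μ(Δ_i)/m(Δ_i) ≥ μ(Δ_j)/m(Δ_j) whenever i < j. -/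
open MeasureTheory Set Filter Topology
open scoped ENNReal

/-- Cells of a partition of `[0,1]` into intervals determined by endpoints `t 0 < t 1 < … < t N`:
the first cell is closed, the others are left-open, so they are pairwise disjoint and cover `[0,1]`. -/
def cellOf {N : ℕ} (t : Fin (N+1) → ℝ) (i : Fin N) : Set ℝ :=
  if i.val = 0 then Set.Icc (t i.castSucc) (t i.succ) else Set.Ioc (t i.castSucc) (t i.succ)

/-!
Sliding an interval to the right can only decrease its mass. In particular there are no atoms
in `(0, 1]`: an atom at `p` would be dominated by an atom at every point of `[0, p]`. Then fix
a mesh `h` and the test interval `[b, b + h]` at the left end of the right cell `(b, b']`. The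
left cell `[a, a']` contains `⌊(a' - a) / h⌋` disjoint intervals of length `h`, each at least
as heavy as the test interval, while `(b, b']` is covered by `⌈(b' - b) / h⌉` right translates
of it. Letting `h → 0` compares the two densities.
-/
namespace MonotonicMeasure

variable {μ : Measure ℝ} {a c h l x : ℝ}

theorem measure_Icc_add_inter_le (hμ : MonotonicMeasure μ) (ha : 0 ≤ a) (hal : a + l ≤ 1)
    (hx : 0 ≤ x) : μ (Icc (a + x) (a + l + x) ∩ Icc 0 1) ≤ μ (Icc a (a + l)) := by
  by_cases hx1 : x ≤ 1
  · simpa only [image_add_const_Icc] using hμ a (a + l) (Icc_subset_Icc ha hal) x ⟨hx, hx1⟩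
  · have hempty : Icc (a + x) (a + l + x) ∩ Icc 0 1 = ∅ :=
      eq_empty_of_forall_notMem fun y ⟨hy, hy01⟩ => by linarith [hy.1, hy01.2]
    simp [hempty]

theorem measure_Icc_le_of_le (hμ : MonotonicMeasure μ) (ha : 0 ≤ a) (hac : a ≤ c)
    (hcl : c + l ≤ 1) : μ (Icc c (c + l)) ≤ μ (Icc a (a + l)) := by
  have h := hμ.measure_Icc_add_inter_le ha (by linarith) (sub_nonneg.2 hac)
  rwa [add_sub_cancel, show a + l + (c - a) = c + l by ring,
    inter_eq_left.2 (Icc_subset_Icc (by linarith) hcl)] at h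

theorem measure_singleton_eq_zero [SFinite μ] (hμ : MonotonicMeasure μ) {p : ℝ} (hp : 0 < p)
    (hp1 : p ≤ 1) : μ {p} = 0 := by
  by_contra hne
  have hatoms : Icc 0 p ⊆ {q | 0 < μ {q}} := fun q hq => by
    have hle := hμ.measure_Icc_le_of_le (l := 0) hq.1 hq.2 (by linarith)
    simp only [add_zero, Icc_self] at hle
    exact (pos_iff_ne_zero.2 hne).trans_le hle
  have hcount : (Icc 0 p).Countable :=
    (Measure.countable_meas_pos_of_disjoint_iUnion (μ := μ) measurableSet_singleton
      fun q q' hqq' => disjoint_singleton.2 hqq').mono hatoms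
  have hvol := hcount.measure_zero volume
  rw [Real.volume_Icc, ENNReal.ofReal_eq_zero] at hvol
  linarith

theorem measure_Ioc_eq_measure_Icc [SFinite μ] (hμ : MonotonicMeasure μ) {p : ℝ} (hp : 0 < p)
    (hp1 : p ≤ 1) (q : ℝ) : μ (Ioc p q) = μ (Icc p q) := by
  rw [← Icc_sdiff_left, measure_sdiff_null (hμ.measure_singleton_eq_zero hp hp1)]

theorem measure_Ico_eq_measure_Icc [SFinite μ] (hμ : MonotonicMeasure μ) {q : ℝ} (hq : 0 < q)
    (hq1 : q ≤ 1) (p : ℝ) : μ (Ico p q) = μ (Icc p q) := by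
  rw [← Icc_sdiff_right, measure_sdiff_null (hμ.measure_singleton_eq_zero hq hq1)]

theorem natCast_mul_measureReal_Icc_le [IsFiniteMeasure μ] (hμ : MonotonicMeasure μ)
    (ha : 0 ≤ a) (hh : 0 < h) (hch : c + h ≤ 1) :
    ∀ n : ℕ, a + n * h ≤ c → n * μ.real (Icc c (c + h)) ≤ μ.real (Ico a (a + n * h))
  | 0, _ => by simp
  | n + 1, hn => by
    push_cast at hn ⊢
    set p := a + n * h with hp
    have hpiece : μ.real (Icc c (c + h)) ≤ μ.real (Ico p (p + h)) := by
      rw [measureReal_def, measureReal_def, hμ.measure_Ico_eq_measure_Icc (by positivity)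
        (by linarith)]
      exact ENNReal.toReal_mono (measure_ne_top _ _)
        (hμ.measure_Icc_le_of_le (by positivity) (by linarith) hch)
    have hsplit : Ico a (a + (n + 1) * h) = Ico a p ∪ Ico p (p + h) := by
      rw [Ico_union_Ico_eq_Ico (le_add_of_nonneg_right (by positivity)) (by linarith), hp]
      ring_nf
    rw [hsplit, measureReal_union Ico_disjoint_Ico_same measurableSet_Ico]
    linarith [natCast_mul_measureReal_Icc_le hμ ha hh hch n (by linarith)]

theorem measureReal_Ioc_inter_le_natCast_mul [IsFiniteMeasure μ] (hμ : MonotonicMeasure μ)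
    (hc : 0 ≤ c) (hh : 0 ≤ h) (hch : c + h ≤ 1) :
    ∀ m : ℕ, μ.real (Ioc c (c + m * h) ∩ Icc 0 1) ≤ m * μ.real (Icc c (c + h))
  | 0 => by simp
  | m + 1 => by
    push_cast
    set p := c + m * h
    have hpiece : μ.real (Icc p (p + h) ∩ Icc 0 1) ≤ μ.real (Icc c (c + h)) := by
      have hle := hμ.measure_Icc_add_inter_le hc hch (x := m * h) (by positivity)
      rw [show c + h + m * h = p + h by ring] at hle
      exact ENNReal.toReal_mono (measure_ne_top _ _) hle
    have hcover : Ioc c (c + (m + 1) * h) ∩ Icc 0 1 ⊆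
        (Ioc c p ∩ Icc 0 1) ∪ (Icc p (p + h) ∩ Icc 0 1) := by
      rintro y ⟨⟨hcy, hy⟩, hy01⟩
      by_cases hyp : y ≤ p
      · exact Or.inl ⟨⟨hcy, hyp⟩, hy01⟩
      · exact Or.inr ⟨⟨by linarith, by linarith⟩, hy01⟩
    calc μ.real (Ioc c (c + (m + 1) * h) ∩ Icc 0 1)
        ≤ μ.real (Ioc c p ∩ Icc 0 1) + μ.real (Icc p (p + h) ∩ Icc 0 1) :=
          (measureReal_mono hcover).trans (measureReal_union_le _ _)
      _ ≤ m * μ.real (Icc c (c + h)) + μ.real (Icc c (c + h)) :=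
          add_le_add (measureReal_Ioc_inter_le_natCast_mul hμ hc hh hch m) hpiece
      _ = (m + 1) * μ.real (Icc c (c + h)) := by ring

theorem measureReal_Ioc_mul_le [IsFiniteMeasure μ] (hμ : MonotonicMeasure μ) {a a' b b' : ℝ}
    (ha : 0 ≤ a) (haa' : a ≤ a') (hab : a' ≤ b) (hbb' : b < b') (hb' : b' ≤ 1) :
    μ.real (Ioc b b') * (a' - a) ≤ μ.real (Icc a a') * (b' - b) := by
  set I := μ.real (Icc a a')
  set J := μ.real (Ioc b b')
  have hmesh : ∀ h ∈ Ioo 0 (1 - b), (a' - a - h) * J ≤ (b' - b + h) * I := by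
    rintro h ⟨hh, hhb⟩
    set n := ⌊(a' - a) / h⌋₊
    set m := ⌈(b' - b) / h⌉₊
    set S := μ.real (Icc b (b + h))
    have hn : a' - a - h ≤ n * h ∧ n * h ≤ a' - a := by
      have hlt := Nat.lt_floor_add_one ((a' - a) / h)
      have hle := Nat.floor_le (div_nonneg (sub_nonneg.2 haa') hh.le)
      rw [div_lt_iff₀ hh] at hlt
      rw [le_div_iff₀ hh] at hle
      constructor <;> linarith
    have hm : b' - b ≤ m * h ∧ m * h ≤ b' - b + h := by
      have hle := Nat.le_ceil ((b' - b) / h)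
      have hlt := Nat.ceil_lt_add_one (div_nonneg (sub_nonneg.2 hbb'.le) hh.le)
      rw [div_le_iff₀ hh] at hle
      rw [← sub_lt_iff_lt_add, lt_div_iff₀ hh] at hlt
      constructor <;> linarith
    have hlower : n * S ≤ I :=
      (hμ.natCast_mul_measureReal_Icc_le ha hh (by linarith) n (by linarith)).trans
        (measureReal_mono (Ico_subset_Icc_self.trans (Icc_subset_Icc_right (by linarith))))
    have hupper : J ≤ m * S :=
      (measureReal_mono (show Ioc b b' ⊆ Ioc b (b + m * h) ∩ Icc 0 1 from
        fun y ⟨hby, hyb'⟩ => ⟨⟨hby, by linarith⟩, by linarith, by linarith⟩)).trans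
        (hμ.measureReal_Ioc_inter_le_natCast_mul (by linarith) hh.le (by linarith) m)
    have hJ : 0 ≤ J := measureReal_nonneg
    have hnm : n * J ≤ m * I :=
      calc n * J ≤ n * (m * S) := mul_le_mul_of_nonneg_left hupper n.cast_nonneg
        _ = m * (n * S) := by ring
        _ ≤ m * I := mul_le_mul_of_nonneg_left hlower m.cast_nonneg
    calc (a' - a - h) * J ≤ n * h * J := mul_le_mul_of_nonneg_right hn.1 hJ
      _ = h * (n * J) := by ring
      _ ≤ h * (m * I) := mul_le_mul_of_nonneg_left hnm hh.le
      _ = m * h * I := by ring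
      _ ≤ (b' - b + h) * I := mul_le_mul_of_nonneg_right hm.2 measureReal_nonneg
  have hlim : Tendsto (fun h => (b' - b + h) * I - (a' - a - h) * J) (𝓝[>] 0)
      (𝓝 ((b' - b + 0) * I - (a' - a - 0) * J)) :=
    ((by fun_prop : Continuous fun h : ℝ => (b' - b + h) * I - (a' - a - h) * J).tendsto
      0).mono_left nhdsWithin_le_nhds
  have hlimit := ge_of_tendsto hlim (mem_of_superset (Ioo_mem_nhdsGT (by linarith))
    fun h hh => sub_nonneg.2 (hmesh h hh))
  linarith

theorem measure_Ioc_div_le [IsFiniteMeasure μ] (hμ : MonotonicMeasure μ) {a a' b b' : ℝ}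
    (ha : 0 ≤ a) (haa' : a < a') (hab : a' ≤ b) (hbb' : b < b') (hb' : b' ≤ 1) :
    μ (Ioc b b') / ENNReal.ofReal (b' - b) ≤ μ (Icc a a') / ENNReal.ofReal (a' - a) := by
  rw [← ofReal_measureReal, ← ofReal_measureReal,
    ← ENNReal.ofReal_div_of_pos (sub_pos.2 hbb'), ← ENNReal.ofReal_div_of_pos (sub_pos.2 haa')]
  exact ENNReal.ofReal_le_ofReal ((div_le_div_iff₀ (sub_pos.2 hbb') (sub_pos.2 haa')).2
    (hμ.measureReal_Ioc_mul_le ha haa'.le hab hbb' hb'))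

theorem measure_cellOf [SFinite μ] (hμ : MonotonicMeasure μ) {N : ℕ} {t : Fin (N + 1) → ℝ}
    (ht : StrictMono t) (ht0 : 0 ≤ t 0) (ht1 : t (Fin.last N) ≤ 1) (i : Fin N) :
    μ (cellOf t i) = μ (Icc (t i.castSucc) (t i.succ)) := by
  unfold cellOf
  split_ifs with hi
  · rfl
  · exact hμ.measure_Ioc_eq_measure_Icc
      (ht0.trans_lt (ht (Fin.pos_iff_ne_zero.2 (by simpa [Fin.ext_iff] using hi))))
      ((ht.monotone (Fin.le_last _)).trans ht1) _

end MonotonicMeasure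

theorem volume_cellOf {N : ℕ} (t : Fin (N + 1) → ℝ) (i : Fin N) :
    volume (cellOf t i) = ENNReal.ofReal (t i.succ - t i.castSucc) := by
  unfold cellOf
  split_ifs <;> simp

theorem stmt7_general {N : ℕ} (t : Fin (N+1) → ℝ) (htmono : StrictMono t)
    (ht0 : t 0 = 0) (ht1 : t (Fin.last N) = 1)
    (μ : Measure ℝ) [IsProbabilityMeasure μ]
    (hμ : MonotonicMeasure μ)
    (i j : Fin N) (hij : i < j) :
    μ (cellOf t j) / volume (cellOf t j) ≤ μ (cellOf t i) / volume (cellOf t i) := by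
  have hcellj : cellOf t j = Ioc (t j.castSucc) (t j.succ) :=
    if_neg (Nat.ne_zero_of_lt (Fin.lt_def.1 hij))
  rw [hμ.measure_cellOf htmono ht0.ge ht1.le i, volume_cellOf t i, volume_cellOf t j, hcellj]
  exact hμ.measure_Ioc_div_le (ht0 ▸ htmono.monotone (Fin.zero_le _))
    (htmono i.castSucc_lt_succ) (htmono.monotone (Fin.succ_le_castSucc_iff.2 hij))
    (htmono j.castSucc_lt_succ) (ht1 ▸ htmono.monotone (Fin.le_last _))

theorem stmt7 {N : ℕ} (hN : 0 < N) (t : Fin (N+1) → ℝ) (htmono : StrictMono t)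
    (ht0 : t 0 = 0) (ht1 : t (Fin.last N) = 1)
    (μ : Measure ℝ) [IsProbabilityMeasure μ]
    (hsupp : μ ((Set.Icc (0:ℝ) 1)ᶜ) = 0)
    (hμ : MonotonicMeasure μ)
    (i j : Fin N) (hij : i < j) :
    μ (cellOf t j) / volume (cellOf t j) ≤ μ (cellOf t i) / volume (cellOf t i) :=
  stmt7_general t htmono ht0 ht1 μ hμ i j hij
end

section
/- Let G : [0,c] → [0,1] be a concave continuous map with G(0) = 0, and let μ be a monotonic probability measure on [0,1]. For any two intervals A, B ⊆ [0,c] with inf A ≤ inf B, sup A ≤ sup B, and m(A) = m(B), one has μ(G(A)) ≥ μ(G(B)). -/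
open MeasureTheory Set

/-!
Concavity of `G` gives `G a + G b' ≤ G b + G a'`. Since `G` is continuous and monotone, `G(A)`
and `G(B)` are the intervals `[G a, G a']` and `[G b, G b']`, so `G(B)` lies inside the translate
of `G(A)` by `G b' - G a'` (clipped to `[0,1]`), and monotonicity of `μ` finishes the proof.
-/

section Concave

variable {𝕜 : Type*} [Field 𝕜] [LinearOrder 𝕜] [IsStrictOrderedRing 𝕜] {s : Set 𝕜} {f : 𝕜 → 𝕜}

theorem ConcaveOn.chord_le_of_mem_Icc (hf : ConcaveOn 𝕜 s f) {x y w : 𝕜} (hx : x ∈ s)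
    (hw : w ∈ s) (hxw : x < w) (hy : y ∈ Icc x w) :
    (w - y) * f x + (y - x) * f w ≤ (w - x) * f y := by
  have hwx : 0 < w - x := sub_pos.2 hxw
  have key := hf.2 hx hw (div_nonneg (sub_nonneg.2 hy.2) hwx.le)
    (div_nonneg (sub_nonneg.2 hy.1) hwx.le) (by field)
  have hy_eq : ((w - y) / (w - x)) • x + ((y - x) / (w - x)) • w = y := by
    simp only [smul_eq_mul]; field
  rw [hy_eq] at key
  simp only [smul_eq_mul] at key
  rwa [div_mul_eq_mul_div, div_mul_eq_mul_div, ← add_div, div_le_iff₀ hwx,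
    mul_comm (f y)] at key

theorem ConcaveOn.add_le_add_of_mem_Icc (hf : ConcaveOn 𝕜 s f) {x y z w : 𝕜} (hx : x ∈ s)
    (hw : w ∈ s) (hy : y ∈ Icc x w) (hz : z ∈ Icc x w) (hsum : y + z = x + w) :
    f x + f w ≤ f y + f z := by
  rcases (hy.1.trans hy.2).eq_or_lt with rfl | hxw
  · obtain rfl : y = x := le_antisymm hy.2 hy.1
    obtain rfl : z = y := le_antisymm hz.2 hz.1
    exact le_rfl
  have hy_chord := hf.chord_le_of_mem_Icc hx hw hxw hy
  have hz_chord := hf.chord_le_of_mem_Icc hx hw hxw hz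
  refine le_of_mul_le_mul_left ?_ (sub_pos.2 hxw)
  linear_combination hy_chord + hz_chord + (f x - f w) * hsum

end Concave

theorem MonotonicMeasure.measure_Icc_le_of_shift {μ : Measure ℝ} (hμ : MonotonicMeasure μ)
    {p q r s x : ℝ} (hpq : Icc p q ⊆ Icc 0 1) (hrs : Icc r s ⊆ Icc 0 1) (hx : x ∈ Icc (0:ℝ) 1)
    (hr : p + x ≤ r) (hs : s ≤ q + x) : μ (Icc r s) ≤ μ (Icc p q) :=
  calc μ (Icc r s) ≤ μ ((fun y => y + x) '' Icc p q ∩ Icc 0 1) := by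
        refine measure_mono (subset_inter ?_ hrs)
        rw [image_add_const_Icc]
        exact Icc_subset_Icc hr hs
    _ ≤ μ (Icc p q) := hμ p q hpq x hx

theorem stmt9_general (c : ℝ) (G : ℝ → ℝ)
    (hconc : ConcaveOn ℝ (Set.Icc 0 c) G) (hcont : ContinuousOn G (Set.Icc 0 c))
    (hmaps : Set.MapsTo G (Set.Icc 0 c) (Set.Icc 0 1))
    (hGmono : MonotoneOn G (Set.Icc 0 c))
    (μ : Measure ℝ)
    (hμ : MonotonicMeasure μ)
    (a a' b b' : ℝ) (haa : a ≤ a') (hbb : b ≤ b')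
    (hA : Set.Icc a a' ⊆ Set.Icc 0 c) (hB : Set.Icc b b' ⊆ Set.Icc 0 c)
    (hinf : a ≤ b) (hsup : a' ≤ b') (hlen : a' - a = b' - b) :
    μ (G '' Set.Icc b b') ≤ μ (G '' Set.Icc a a') := by
  have ha : a ∈ Icc 0 c := hA (left_mem_Icc.2 haa)
  have ha' : a' ∈ Icc 0 c := hA (right_mem_Icc.2 haa)
  have hb : b ∈ Icc 0 c := hB (left_mem_Icc.2 hbb)
  have hb' : b' ∈ Icc 0 c := hB (right_mem_Icc.2 hbb)
  rw [(hcont.mono hA).image_Icc_of_monotoneOn haa (hGmono.mono hA),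
    (hcont.mono hB).image_Icc_of_monotoneOn hbb (hGmono.mono hB)]
  have hGab := hconc.add_le_add_of_mem_Icc ha hb' ⟨hinf, hbb⟩ ⟨haa, hsup⟩ (by linarith)
  have hshift : G b' - G a' ∈ Icc (0:ℝ) 1 :=
    ⟨sub_nonneg.2 (hGmono ha' hb' hsup), by linarith [(hmaps hb').2, (hmaps ha').1]⟩
  exact hμ.measure_Icc_le_of_shift (Icc_subset_Icc (hmaps ha).1 (hmaps ha').2)
    (Icc_subset_Icc (hmaps hb).1 (hmaps hb').2) hshift (by linarith) (by linarith)

theorem stmt9 (c : ℝ) (hc : 0 < c) (hc1 : c ≤ 1) (G : ℝ → ℝ)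
    (hconc : ConcaveOn ℝ (Set.Icc 0 c) G) (hcont : ContinuousOn G (Set.Icc 0 c))
    (hG0 : G 0 = 0) (hmaps : Set.MapsTo G (Set.Icc 0 c) (Set.Icc 0 1))
    (hGmono : MonotoneOn G (Set.Icc 0 c))
    (μ : Measure ℝ) [IsProbabilityMeasure μ]
    (hsupp : μ ((Set.Icc (0:ℝ) 1)ᶜ) = 0)
    (hμ : MonotonicMeasure μ)
    (a a' b b' : ℝ) (haa : a ≤ a') (hbb : b ≤ b')
    (hA : Set.Icc a a' ⊆ Set.Icc 0 c) (hB : Set.Icc b b' ⊆ Set.Icc 0 c)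
    (hinf : a ≤ b) (hsup : a' ≤ b') (hlen : a' - a = b' - b) :
    μ (G '' Set.Icc b b') ≤ μ (G '' Set.Icc a a') :=
  stmt9_general c G hconc hcont hmaps hGmono μ hμ a a' b b' haa hbb hA hB hinf hsup hlen
end
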